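/- arXiv:2004.04973 — 3 statements merged into one kernel-verified Lean document; each statement's English description precedes it below -/
import Mathlib

section
/- For every symmetric traceless 3×3 real matrix Q, the potential f(Q) = −(1/2)|Q|² − tr(Q³) + (3/4)|Q|⁴ + 2/9 is nonnegative, and f(Q) = 0 if and only if Q = n⊗n − (1/3)I for some unit vector n ∈ ℝ³. -/
open Matrix

/-- The Landau–de Gennes bulk potential on `3×3` matrices, with the constant `2/9`
chosen so that it vanishes on the uniaxial manifold. -/
noncomputable def LdGf (Q : Matrix (Fin 3) (Fin 3) ℝ) : ℝ :=
  -(1/2) * trace (Q * Q) - trace (Q * Q * Q) + (3/4) * (trace (Q * Q))^2 + 2/9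

lemma LdGf_key (Q : Matrix (Fin 3) (Fin 3) ℝ) (hsymm : Q.IsSymm) (htr : Q.trace = 0) :
    LdGf Q = (3/2) * ∑ i, ∑ j,
      ((Q*Q - (1/3:ℝ)•Q - (2/9:ℝ)•(1 : Matrix (Fin 3) (Fin 3) ℝ)) i j)^2 := by
  have h10 : Q 1 0 = Q 0 1 := hsymm.apply 0 1
  have h20 : Q 2 0 = Q 0 2 := hsymm.apply 0 2
  have h21 : Q 2 1 = Q 1 2 := hsymm.apply 1 2
  have h22 : Q 2 2 = -(Q 0 0 + Q 1 1) := by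
    have := htr
    simp [Matrix.trace, Matrix.diag, Fin.sum_univ_three] at this
    linarith
  simp only [LdGf, Matrix.trace, Matrix.diag, Matrix.mul_apply, Fin.sum_univ_three,
    Matrix.sub_apply, Matrix.smul_apply, Matrix.one_apply, smul_eq_mul]
  norm_num [Fin.ext_iff]
  rw [h10, h20, h21, h22]
  ring


lemma build (a b c d e f : ℝ)
    (ha : a = a^2 + d^2 + e^2) (hb : b = d^2 + b^2 + f^2) (hc : c = e^2 + f^2 + c^2)
    (h1 : e*f = c*d) (h2 : d*f = e*b) (h3 : d*e = f*a) (hsum : a + b + c = 1) :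
    ∃ n : Fin 3 → ℝ, n 0 ^ 2 + n 1 ^ 2 + n 2 ^ 2 = 1 ∧
      n 0 * n 0 = a ∧ n 0 * n 1 = d ∧ n 0 * n 2 = e ∧
      n 1 * n 1 = b ∧ n 1 * n 2 = f ∧ n 2 * n 2 = c := by
  have ha0 : 0 ≤ a := by nlinarith [sq_nonneg a, sq_nonneg d, sq_nonneg e]
  have hb0 : 0 ≤ b := by nlinarith [sq_nonneg b, sq_nonneg d, sq_nonneg f]
  have hc0 : 0 ≤ c := by nlinarith [sq_nonneg c, sq_nonneg e, sq_nonneg f]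
  have hdab : d^2 = a*b := by
    linear_combination (-(1/2:ℝ))*ha - (1/2)*hb + (1/2)*hc + ((c-a-b)/2)*hsum
  have heac : e^2 = a*c := by
    linear_combination (-(1/2:ℝ))*ha + (1/2)*hb - (1/2)*hc + ((b-a-c)/2)*hsum
  have hfbc : f^2 = b*c := by
    linear_combination ((1/2:ℝ))*ha - (1/2)*hb - (1/2)*hc + ((a-b-c)/2)*hsum
  by_cases hA : 0 < a
  · have hane : a ≠ 0 := ne_of_gt hA
    have hs : Real.sqrt a * Real.sqrt a = a := Real.mul_self_sqrt ha0
    have hsne : Real.sqrt a ≠ 0 := ne_of_gt (Real.sqrt_pos.mpr hA)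
    refine ⟨![Real.sqrt a, d / Real.sqrt a, e / Real.sqrt a], ?_, ?_, ?_, ?_, ?_, ?_, ?_⟩
    · show Real.sqrt a ^ 2 + (d / Real.sqrt a) ^ 2 + (e / Real.sqrt a) ^ 2 = 1
      rw [div_pow, div_pow, sq (Real.sqrt a), hs]
      field_simp
      linear_combination -ha
    · show Real.sqrt a * Real.sqrt a = a; exact hs
    · show Real.sqrt a * (d / Real.sqrt a) = d
      rw [mul_comm, div_mul_cancel₀ _ hsne]
    · show Real.sqrt a * (e / Real.sqrt a) = e
      rw [mul_comm, div_mul_cancel₀ _ hsne]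
    · show d / Real.sqrt a * (d / Real.sqrt a) = b
      rw [div_mul_div_comm, hs, div_eq_iff hane]; linear_combination hdab
    · show d / Real.sqrt a * (e / Real.sqrt a) = f
      rw [div_mul_div_comm, hs, div_eq_iff hane]; linear_combination h3
    · show e / Real.sqrt a * (e / Real.sqrt a) = c
      rw [div_mul_div_comm, hs, div_eq_iff hane]; linear_combination heac
  by_cases hB : 0 < b
  · have hbne : b ≠ 0 := ne_of_gt hB
    have hs : Real.sqrt b * Real.sqrt b = b := Real.mul_self_sqrt hb0
    have hsne : Real.sqrt b ≠ 0 := ne_of_gt (Real.sqrt_pos.mpr hB)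
    refine ⟨![d / Real.sqrt b, Real.sqrt b, f / Real.sqrt b], ?_, ?_, ?_, ?_, ?_, ?_, ?_⟩
    · show (d / Real.sqrt b) ^ 2 + Real.sqrt b ^ 2 + (f / Real.sqrt b) ^ 2 = 1
      rw [div_pow, div_pow, sq (Real.sqrt b), hs]
      field_simp
      linear_combination -hb
    · show d / Real.sqrt b * (d / Real.sqrt b) = a
      rw [div_mul_div_comm, hs, div_eq_iff hbne]; linear_combination hdab
    · show d / Real.sqrt b * Real.sqrt b = d
      rw [div_mul_cancel₀ _ hsne]
    · show d / Real.sqrt b * (f / Real.sqrt b) = e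
      rw [div_mul_div_comm, hs, div_eq_iff hbne]; linear_combination h2
    · show Real.sqrt b * Real.sqrt b = b; exact hs
    · show Real.sqrt b * (f / Real.sqrt b) = f
      rw [mul_comm, div_mul_cancel₀ _ hsne]
    · show f / Real.sqrt b * (f / Real.sqrt b) = c
      rw [div_mul_div_comm, hs, div_eq_iff hbne]; linear_combination hfbc
  · have hC : 0 < c := by
      have haz : a = 0 := le_antisymm (not_lt.mp hA) ha0
      have hbz : b = 0 := le_antisymm (not_lt.mp hB) hb0
      linarith
    have hcne : c ≠ 0 := ne_of_gt hC
    have hs : Real.sqrt c * Real.sqrt c = c := Real.mul_self_sqrt hc0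
    have hsne : Real.sqrt c ≠ 0 := ne_of_gt (Real.sqrt_pos.mpr hC)
    refine ⟨![e / Real.sqrt c, f / Real.sqrt c, Real.sqrt c], ?_, ?_, ?_, ?_, ?_, ?_, ?_⟩
    · show (e / Real.sqrt c) ^ 2 + (f / Real.sqrt c) ^ 2 + Real.sqrt c ^ 2 = 1
      rw [div_pow, div_pow, sq (Real.sqrt c), hs]
      field_simp
      linear_combination -hc
    · show e / Real.sqrt c * (e / Real.sqrt c) = a
      rw [div_mul_div_comm, hs, div_eq_iff hcne]; linear_combination heac
    · show e / Real.sqrt c * (f / Real.sqrt c) = d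
      rw [div_mul_div_comm, hs, div_eq_iff hcne]; linear_combination h1
    · show e / Real.sqrt c * Real.sqrt c = e
      rw [div_mul_cancel₀ _ hsne]
    · show f / Real.sqrt c * (f / Real.sqrt c) = b
      rw [div_mul_div_comm, hs, div_eq_iff hcne]; linear_combination hfbc
    · show f / Real.sqrt c * Real.sqrt c = f
      rw [div_mul_cancel₀ _ hsne]
    · show Real.sqrt c * Real.sqrt c = c; exact hs

theorem stmt5 (Q : Matrix (Fin 3) (Fin 3) ℝ) (hsymm : Q.IsSymm) (htr : Q.trace = 0) :
    0 ≤ LdGf Q ∧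
    (LdGf Q = 0 ↔
      ∃ n : Fin 3 → ℝ, (∑ i, n i ^ 2 = 1) ∧ Q = vecMulVec n n - (1/3 : ℝ) • 1) := by
  have key := LdGf_key Q hsymm htr
  have h10 : Q 1 0 = Q 0 1 := hsymm.apply 0 1
  have h20 : Q 2 0 = Q 0 2 := hsymm.apply 0 2
  have h21 : Q 2 1 = Q 1 2 := hsymm.apply 1 2
  have htr' : Q 0 0 + Q 1 1 + Q 2 2 = 0 := by
    have := htr
    simp [Matrix.trace, Matrix.diag, Fin.sum_univ_three] at this
    linarith
  constructor
  · rw [key]; positivity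
  constructor
  · -- forward
    intro h0
    rw [key] at h0
    have hS : ∀ i j, ((Q*Q - (1/3:ℝ)•Q - (2/9:ℝ)•(1 : Matrix (Fin 3) (Fin 3) ℝ)) i j) = 0 := by
      intro i j
      have hsum0 : (∑ i, ∑ j,
          ((Q*Q - (1/3:ℝ)•Q - (2/9:ℝ)•(1 : Matrix (Fin 3) (Fin 3) ℝ)) i j)^2) = 0 := by
        linarith
      have h1 := (Finset.sum_eq_zero_iff_of_nonneg (fun i _ => Finset.sum_nonneg
        (fun j _ => sq_nonneg _))).mp hsum0 i (Finset.mem_univ i)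
      have h2 := (Finset.sum_eq_zero_iff_of_nonneg (fun j _ => sq_nonneg _)).mp h1 j
        (Finset.mem_univ j)
      exact pow_eq_zero_iff (by norm_num) |>.mp h2
    have E : ∀ i j, (Q*Q) i j - (1/3)*Q i j - (2/9)*(if i = j then 1 else 0) = 0 := by
      intro i j
      have := hS i j
      simpa [Matrix.sub_apply, Matrix.smul_apply, Matrix.one_apply, smul_eq_mul] using this
    have e00 := E 0 0; have e11 := E 1 1; have e22 := E 2 2
    have e01 := E 0 1; have e02 := E 0 2; have e12 := E 1 2
    simp only [Matrix.mul_apply, Fin.sum_univ_three, h10, h20, h21, if_pos rfl]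
      at e00 e11 e22 e01 e02 e12
    norm_num [Fin.ext_iff] at e00 e11 e22 e01 e02 e12
    obtain ⟨n, hn1, p00, p01, p02, p11, p12, p22⟩ :=
      build (Q 0 0 + 1/3) (Q 1 1 + 1/3) (Q 2 2 + 1/3) (Q 0 1) (Q 0 2) (Q 1 2)
        (by linear_combination -e00) (by linear_combination -e11) (by linear_combination -e22)
        (by linear_combination e01 - Q 0 1 * htr')
        (by linear_combination e02 - Q 0 2 * htr')
        (by linear_combination e12 - Q 1 2 * htr')
        (by linarith)
    refine ⟨n, by rw [Fin.sum_univ_three]; exact hn1, ?_⟩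
    have g00 : Q 0 0 = (vecMulVec n n - (1/3:ℝ)•(1 : Matrix (Fin 3) (Fin 3) ℝ)) 0 0 := by
      simp [Matrix.vecMulVec_apply, Matrix.sub_apply, Matrix.smul_apply, Matrix.one_apply]
      linear_combination -p00
    have g01 : Q 0 1 = (vecMulVec n n - (1/3:ℝ)•(1 : Matrix (Fin 3) (Fin 3) ℝ)) 0 1 := by
      simp [Matrix.vecMulVec_apply, Matrix.sub_apply, Matrix.smul_apply, Matrix.one_apply]
      linear_combination -p01
    have g02 : Q 0 2 = (vecMulVec n n - (1/3:ℝ)•(1 : Matrix (Fin 3) (Fin 3) ℝ)) 0 2 := by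
      simp [Matrix.vecMulVec_apply, Matrix.sub_apply, Matrix.smul_apply, Matrix.one_apply]
      linear_combination -p02
    have g11 : Q 1 1 = (vecMulVec n n - (1/3:ℝ)•(1 : Matrix (Fin 3) (Fin 3) ℝ)) 1 1 := by
      simp [Matrix.vecMulVec_apply, Matrix.sub_apply, Matrix.smul_apply, Matrix.one_apply]
      linear_combination -p11
    have g12 : Q 1 2 = (vecMulVec n n - (1/3:ℝ)•(1 : Matrix (Fin 3) (Fin 3) ℝ)) 1 2 := by
      simp [Matrix.vecMulVec_apply, Matrix.sub_apply, Matrix.smul_apply, Matrix.one_apply]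
      linear_combination -p12
    have g22 : Q 2 2 = (vecMulVec n n - (1/3:ℝ)•(1 : Matrix (Fin 3) (Fin 3) ℝ)) 2 2 := by
      simp [Matrix.vecMulVec_apply, Matrix.sub_apply, Matrix.smul_apply, Matrix.one_apply]
      linear_combination -p22
    have g10 : Q 1 0 = (vecMulVec n n - (1/3:ℝ)•(1 : Matrix (Fin 3) (Fin 3) ℝ)) 1 0 := by
      simp [Matrix.vecMulVec_apply, Matrix.sub_apply, Matrix.smul_apply, Matrix.one_apply]
      rw [h10]; linear_combination -p01
    have g20 : Q 2 0 = (vecMulVec n n - (1/3:ℝ)•(1 : Matrix (Fin 3) (Fin 3) ℝ)) 2 0 := by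
      simp [Matrix.vecMulVec_apply, Matrix.sub_apply, Matrix.smul_apply, Matrix.one_apply]
      rw [h20]; linear_combination -p02
    have g21 : Q 2 1 = (vecMulVec n n - (1/3:ℝ)•(1 : Matrix (Fin 3) (Fin 3) ℝ)) 2 1 := by
      simp [Matrix.vecMulVec_apply, Matrix.sub_apply, Matrix.smul_apply, Matrix.one_apply]
      rw [h21]; linear_combination -p12
    ext i j
    fin_cases i <;> fin_cases j
    · exact g00
    · exact g01
    · exact g02
    · exact g10
    · exact g11
    · exact g12
    · exact g20
    · exact g21
    · exact g22
  · -- backward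
    rintro ⟨n, hn, hQ⟩
    rw [key]
    have hn' : n 0 ^2 + n 1 ^2 + n 2 ^2 = 1 := by
      simpa [Fin.sum_univ_three] using hn
    have tac : ∀ i j : Fin 3,
        ((Q*Q - (1/3:ℝ)•Q - (2/9:ℝ)•(1 : Matrix (Fin 3) (Fin 3) ℝ)) i j) =
        (∑ k, Q i k * Q k j) - (1/3)*Q i j - (2/9)*(if i = j then 1 else 0) := by
      intro i j
      simp [Matrix.sub_apply, Matrix.smul_apply, Matrix.mul_apply, Matrix.one_apply]
    have hq : ∀ i j : Fin 3, Q i j = n i * n j - (1/3)*(if i = j then 1 else 0) := by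
      intro i j
      rw [hQ]
      simp [Matrix.vecMulVec_apply, Matrix.sub_apply, Matrix.smul_apply, Matrix.one_apply]
    have z00 : ((Q*Q - (1/3:ℝ)•Q - (2/9:ℝ)•(1 : Matrix (Fin 3) (Fin 3) ℝ)) 0 0) = 0 := by
      rw [tac 0 0, Fin.sum_univ_three]
      simp only [hq]
      norm_num [Fin.ext_iff]
      linear_combination (n 0 * n 0) * hn'
    have z01 : ((Q*Q - (1/3:ℝ)•Q - (2/9:ℝ)•(1 : Matrix (Fin 3) (Fin 3) ℝ)) 0 1) = 0 := by
      rw [tac 0 1, Fin.sum_univ_three]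
      simp only [hq]
      norm_num [Fin.ext_iff]
      linear_combination (n 0 * n 1) * hn'
    have z02 : ((Q*Q - (1/3:ℝ)•Q - (2/9:ℝ)•(1 : Matrix (Fin 3) (Fin 3) ℝ)) 0 2) = 0 := by
      rw [tac 0 2, Fin.sum_univ_three]
      simp only [hq]
      norm_num [Fin.ext_iff]
      linear_combination (n 0 * n 2) * hn'
    have z10 : ((Q*Q - (1/3:ℝ)•Q - (2/9:ℝ)•(1 : Matrix (Fin 3) (Fin 3) ℝ)) 1 0) = 0 := by
      rw [tac 1 0, Fin.sum_univ_three]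
      simp only [hq]
      norm_num [Fin.ext_iff]
      linear_combination (n 1 * n 0) * hn'
    have z11 : ((Q*Q - (1/3:ℝ)•Q - (2/9:ℝ)•(1 : Matrix (Fin 3) (Fin 3) ℝ)) 1 1) = 0 := by
      rw [tac 1 1, Fin.sum_univ_three]
      simp only [hq]
      norm_num [Fin.ext_iff]
      linear_combination (n 1 * n 1) * hn'
    have z12 : ((Q*Q - (1/3:ℝ)•Q - (2/9:ℝ)•(1 : Matrix (Fin 3) (Fin 3) ℝ)) 1 2) = 0 := by
      rw [tac 1 2, Fin.sum_univ_three]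
      simp only [hq]
      norm_num [Fin.ext_iff]
      linear_combination (n 1 * n 2) * hn'
    have z20 : ((Q*Q - (1/3:ℝ)•Q - (2/9:ℝ)•(1 : Matrix (Fin 3) (Fin 3) ℝ)) 2 0) = 0 := by
      rw [tac 2 0, Fin.sum_univ_three]
      simp only [hq]
      norm_num [Fin.ext_iff]
      linear_combination (n 2 * n 0) * hn'
    have z21 : ((Q*Q - (1/3:ℝ)•Q - (2/9:ℝ)•(1 : Matrix (Fin 3) (Fin 3) ℝ)) 2 1) = 0 := by
      rw [tac 2 1, Fin.sum_univ_three]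
      simp only [hq]
      norm_num [Fin.ext_iff]
      linear_combination (n 2 * n 1) * hn'
    have z22 : ((Q*Q - (1/3:ℝ)•Q - (2/9:ℝ)•(1 : Matrix (Fin 3) (Fin 3) ℝ)) 2 2) = 0 := by
      rw [tac 2 2, Fin.sum_univ_three]
      simp only [hq]
      norm_num [Fin.ext_iff]
      linear_combination (n 2 * n 2) * hn'
    have hZ : ∀ i j : Fin 3,
        ((Q*Q - (1/3:ℝ)•Q - (2/9:ℝ)•(1 : Matrix (Fin 3) (Fin 3) ℝ)) i j) = 0 := by
      intro i j
      fin_cases i <;> fin_cases j <;> assumption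
    rw [Fin.sum_univ_three]
    simp only [Fin.sum_univ_three, hZ]
    norm_num
end

section
/- Let R_φ be the rotation by angle φ about the e₃-axis in ℝ³ and let Q̃ be a symmetric traceless 3×3 matrix. Then |∂_φ (R_φ Q̃ R_φᵀ)|² = 8 Q̃₁₂² + 2 Q̃₁₃² + 2 Q̃₂₃² + 2(Q̃₁₁ − Q̃₂₂)², and this quantity is independent of φ. -/
/-!
Since `R_φ' = R_φ J` with `J` the generator of rotations about `e₃`, and `Jᵀ = -J`, the product rule
gives `∂_φ (R_φ Q R_φᵀ) = R_φ ⁅J, Q⁆ R_φᵀ`. Conjugation by the orthogonal matrix `R_φ` preserves the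
Frobenius norm, so the quantity equals `|⁅J, Q⁆|²`, which does not involve `φ`. For symmetric `Q`
the entries of `⁅J, Q⁆` are `±2 Q₁₂` (twice), `Q₁₁ - Q₂₂` (twice), `±Q₁₃` and `±Q₂₃` (twice each)
and `0`, whence the coefficients `8` and `2`.
-/

open Matrix

/-- Rotation by angle `φ` about the `e₃`-axis in `ℝ³`. -/
noncomputable def Rrot (φ : ℝ) : Matrix (Fin 3) (Fin 3) ℝ :=
  !![Real.cos φ, -Real.sin φ, 0; Real.sin φ, Real.cos φ, 0; 0, 0, 1]

namespace Matrix

variable {l m n α : Type*} [Fintype m]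

theorem sum_sum_sq_eq_trace_transpose_mul [Fintype n] [CommRing α] (M : Matrix m n α) :
    ∑ i, ∑ j, M i j ^ 2 = trace (Mᵀ * M) := by
  rw [Finset.sum_comm]
  simp only [trace, diag, mul_apply, transpose_apply, sq]

theorem sum_sum_sq_mul_mul_transpose [Fintype n] [DecidableEq n] [CommRing α] {R : Matrix m n α}
    (hR : Rᵀ * R = 1) (M : Matrix n n α) :
    ∑ i, ∑ j, (R * M * Rᵀ) i j ^ 2 = ∑ i, ∑ j, M i j ^ 2 := by
  simp only [sum_sum_sq_eq_trace_transpose_mul, transpose_mul, transpose_transpose]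
  calc trace (R * (Mᵀ * Rᵀ) * (R * M * Rᵀ)) = trace (R * (Mᵀ * M) * Rᵀ) := by
        simp only [Matrix.mul_assoc, ← Matrix.mul_assoc Rᵀ R, hR, Matrix.one_mul]
    _ = trace (Rᵀ * R * (Mᵀ * M)) := trace_mul_cycle R (Mᵀ * M) Rᵀ
    _ = trace (Mᵀ * M) := by rw [hR, Matrix.one_mul]

theorem hasDerivAt_mul_apply {𝕜 : Type*} [NontriviallyNormedField 𝕜] {A : 𝕜 → Matrix l m 𝕜}
    {B : 𝕜 → Matrix m n 𝕜} {A' : Matrix l m 𝕜} {B' : Matrix m n 𝕜} {x : 𝕜}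
    (hA : ∀ i k, HasDerivAt (fun y => A y i k) (A' i k) x)
    (hB : ∀ k j, HasDerivAt (fun y => B y k j) (B' k j) x) (i : l) (j : n) :
    HasDerivAt (fun y => (A y * B y) i j) ((A' * B x + A x * B') i j) x := by
  simp only [mul_apply, add_apply, ← Finset.sum_add_distrib]
  exact HasDerivAt.fun_sum fun k _ => (hA i k).mul (hB k j)

end Matrix

def rotGenerator : Matrix (Fin 3) (Fin 3) ℝ :=
  !![0, -1, 0; 1, 0, 0; 0, 0, 0]

theorem rotGenerator_transpose : rotGeneratorᵀ = -rotGenerator := by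
  ext i j
  fin_cases i <;> fin_cases j <;> simp [rotGenerator]

theorem Rrot_transpose_mul_self (φ : ℝ) : (Rrot φ)ᵀ * Rrot φ = 1 := by
  ext i j
  fin_cases i <;> fin_cases j <;> simp [Rrot, mul_apply, Fin.sum_univ_three, one_apply] <;>
    ring_nf <;> simp

theorem hasDerivAt_Rrot_apply (φ : ℝ) (i k : Fin 3) :
    HasDerivAt (fun ψ => Rrot ψ i k) ((Rrot φ * rotGenerator) i k) φ := by
  fin_cases i <;> fin_cases k <;> simp [Rrot, rotGenerator, mul_apply, Fin.sum_univ_three] <;>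
    first
      | exact Real.hasDerivAt_cos φ
      | exact Real.hasDerivAt_sin φ
      | exact (Real.hasDerivAt_sin φ).neg
      | exact hasDerivAt_const φ _

theorem hasDerivAt_Rrot_conj_apply (Q : Matrix (Fin 3) (Fin 3) ℝ) (φ : ℝ) (i j : Fin 3) :
    HasDerivAt (fun ψ => (Rrot ψ * Q * (Rrot ψ)ᵀ) i j)
      ((Rrot φ * ⁅rotGenerator, Q⁆ * (Rrot φ)ᵀ) i j) φ := by
  have hRQ := hasDerivAt_mul_apply (hasDerivAt_Rrot_apply φ)
    (fun k l => hasDerivAt_const φ (Q k l)) (B' := 0)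
  have h := hasDerivAt_mul_apply hRQ (B := fun ψ => (Rrot ψ)ᵀ)
    (B' := (Rrot φ * rotGenerator)ᵀ) (fun k l => hasDerivAt_Rrot_apply φ l k) i j
  refine h.congr_deriv ?_
  rw [transpose_mul, rotGenerator_transpose, Ring.lie_def]
  noncomm_ring

theorem lie_rotGenerator_of_isSymm {Q : Matrix (Fin 3) (Fin 3) ℝ} (hQ : Q.IsSymm) :
    ⁅rotGenerator, Q⁆ =
      !![-2 * Q 0 1, Q 0 0 - Q 1 1, -Q 1 2; Q 0 0 - Q 1 1, 2 * Q 0 1, Q 0 2; -Q 1 2, Q 0 2, 0] := by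
  ext i j
  fin_cases i <;> fin_cases j <;>
    simp [Ring.lie_def, rotGenerator, mul_apply, vecMul, dotProduct, Fin.sum_univ_three,
      hQ.apply 0 1, hQ.apply 0 2, hQ.apply 1 2] <;> ring

theorem sum_sum_sq_lie_rotGenerator {Q : Matrix (Fin 3) (Fin 3) ℝ} (hQ : Q.IsSymm) :
    ∑ i, ∑ j, ⁅rotGenerator, Q⁆ i j ^ 2
      = 8 * Q 0 1 ^ 2 + 2 * Q 0 2 ^ 2 + 2 * Q 1 2 ^ 2 + 2 * (Q 0 0 - Q 1 1) ^ 2 := by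
  simp only [lie_rotGenerator_of_isSymm hQ, Fin.sum_univ_three, of_apply, cons_val', cons_val_zero,
    cons_val_one, cons_val, cons_val_fin_one]
  ring

theorem stmt6_general (Qt : Matrix (Fin 3) (Fin 3) ℝ) (hsym : Qt.IsSymm)
    (φ : ℝ) :
    (∑ i, ∑ j, (deriv (fun ψ => (Rrot ψ * Qt * (Rrot ψ)ᵀ) i j) φ)^2)
      = 8 * Qt 0 1 ^ 2 + 2 * Qt 0 2 ^ 2 + 2 * Qt 1 2 ^ 2 + 2 * (Qt 0 0 - Qt 1 1)^2 := by
  simp only [fun i j => (hasDerivAt_Rrot_conj_apply Qt φ i j).deriv]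
  rw [sum_sum_sq_mul_mul_transpose (Rrot_transpose_mul_self φ), sum_sum_sq_lie_rotGenerator hsym]

theorem stmt6 (Qt : Matrix (Fin 3) (Fin 3) ℝ) (hsym : Qt.IsSymm) (htr : Qt.trace = 0)
    (φ : ℝ) :
    (∑ i, ∑ j, (deriv (fun ψ => (Rrot ψ * Qt * (Rrot ψ)ᵀ) i j) φ)^2)
      = 8 * Qt 0 1 ^ 2 + 2 * Qt 0 2 ^ 2 + 2 * Qt 1 2 ^ 2 + 2 * (Qt 0 0 - Qt 1 1)^2 :=
  stmt6_general Qt hsym φ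
end

section
/- Gradient comparison for the uniaxial projection: let U⋆ ⊂ S₀ be a compact smooth submanifold, P : U⋆ → L(S₀) the smooth map assigning to u the orthogonal projection onto the normal space (T_u U⋆)^⊥, and c = 2 sup_{u∈U⋆} ‖DP(u)‖. If Q, U : ℝᵏ → S₀ are differentiable with U valued in U⋆ and Q − U = P(U)(Q − U) pointwise, then for every direction index j: |∂_j Q|² ≥ (1 − c·|Q − U|)·|∂_j U|² + |∂_j |Q − U||², wherever |Q−U| is differentiable. -/
/-!
Write `Q = U + D` with `D = Q - U`. Differentiating `P(U) D = D` gives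
`D' = P(U)' D + P(U) D'`; since `P(U)` is self-adjoint and kills the tangent vector `U'`,
`⟪U', D'⟫ = ⟪U', P(U)' D⟫`, which is at least `-(c/2) |D| |U'|²`. Expanding
`|Q'|² = |U'|² + 2⟪U', D'⟫ + |D'|²` and using `|∂ |D|| ≤ |D'|` gives the claim.
-/

open scoped RealInnerProductSpace

section

variable {E : Type*} [NormedAddCommGroup E] [InnerProductSpace ℝ E]

theorem abs_deriv_norm_le {f : ℝ → E} {t : ℝ} (hf : DifferentiableAt ℝ f t) :
    |deriv (fun s => ‖f s‖) t| ≤ ‖deriv f t‖ := by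
  by_cases hnorm : DifferentiableAt ℝ (fun s => ‖f s‖) t
  swap
  · simp [deriv_zero_of_not_differentiableAt hnorm]
  have hslope_norm := (hasDerivAt_iff_tendsto_slope.1 hnorm.hasDerivAt).abs
  have hslope := (hasDerivAt_iff_tendsto_slope.1 hf.hasDerivAt).norm
  refine le_of_tendsto_of_tendsto' hslope_norm hslope fun s => ?_
  simp only [slope, vsub_eq_sub, smul_eq_mul, abs_mul, abs_inv, norm_smul, norm_inv,
    Real.norm_eq_abs]
  gcongr
  exact abs_norm_sub_norm_le _ _

/-- `p` is the normal projection at a point, `u'` a tangent vector there, and `d'` the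
derivative of a normal field `d` (so `d' = p' d + p d'` by differentiating `p d = d`). -/
theorem neg_le_inner_of_normal_deriv {p p' : E →L[ℝ] E} {u' d d' : E} {κ : ℝ}
    (hsym : (p : E →ₗ[ℝ] E).IsSymmetric) (htang : p u' = 0) (hd' : d' = p' d + p d')
    (hp' : ‖p'‖ ≤ κ * ‖u'‖) :
    -(κ * ‖d‖ * ‖u'‖ ^ 2) ≤ ⟪u', d'⟫ := by
  have hinner : ⟪u', d'⟫ = ⟪u', p' d⟫ := by
    have hperp : ⟪u', p d'⟫ = 0 := by
      rw [← ContinuousLinearMap.coe_coe, ← hsym, ContinuousLinearMap.coe_coe, htang,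
        inner_zero_left]
    nth_rewrite 1 [hd']
    rw [inner_add_right, hperp, add_zero]
  calc -(κ * ‖d‖ * ‖u'‖ ^ 2) = -(‖u'‖ * ((κ * ‖u'‖) * ‖d‖)) := by ring
    _ ≤ -(‖u'‖ * (‖p'‖ * ‖d‖)) := by gcongr
    _ ≤ -(‖u'‖ * ‖p' d‖) := by gcongr; exact p'.le_opNorm d
    _ ≤ -|⟪u', p' d⟫| := neg_le_neg (abs_real_inner_le_norm _ _)
    _ ≤ ⟪u', d'⟫ := hinner ▸ neg_abs_le _

end

theorem stmt19_general {E : Type*} [NormedAddCommGroup E] [InnerProductSpace ℝ E]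
    (Q U : ℝ → E) (P : E → (E →L[ℝ] E)) (c t : ℝ)
    (hQ : DifferentiableAt ℝ Q t) (hU : DifferentiableAt ℝ U t)
    (hPU : DifferentiableAt ℝ (fun s => P (U s)) t)
    (hnormal : ∀ s, P (U s) (Q s - U s) = Q s - U s)
    (hsym : ∀ v w : E, (inner ℝ (P (U t) v) w : ℝ) = inner ℝ v (P (U t) w))
    (htang : P (U t) (deriv U t) = 0)
    (hDP : ‖deriv (fun s => P (U s)) t‖ ≤ (c/2) * ‖deriv U t‖) :
    ‖deriv Q t‖^2 ≥ (1 - c * ‖Q t - U t‖) * ‖deriv U t‖^2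
      + (deriv (fun s => ‖Q s - U s‖) t)^2 := by
  set D : ℝ → E := fun s => Q s - U s
  have hD : DifferentiableAt ℝ D t := hQ.sub hU
  have hderivQ : deriv Q t = deriv U t + deriv D t := by
    rw [show deriv D t = deriv Q t - deriv U t from deriv_sub hQ hU, add_sub_cancel]
  have hchain : deriv D t = deriv (fun s => P (U s)) t (D t) + P (U t) (deriv D t) := by
    have hPD : (fun s => P (U s) (D s)) = D := funext hnormal
    rw [← deriv_clm_apply hPU hD, hPD]
  have hinner := neg_le_inner_of_normal_deriv hsym htang hchain hDP
  have hsq_norm_deriv : (deriv (fun s => ‖D s‖) t) ^ 2 ≤ ‖deriv D t‖ ^ 2 :=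
    sq_le_sq.2 (by rw [abs_norm]; exact abs_deriv_norm_le hD)
  rw [ge_iff_le, hderivQ, norm_add_sq_real]
  linarith

theorem stmt19 {E : Type*} [NormedAddCommGroup E] [InnerProductSpace ℝ E]
    (Q U : ℝ → E) (P : E → (E →L[ℝ] E)) (c t : ℝ) (hc : 0 ≤ c)
    (hQ : DifferentiableAt ℝ Q t) (hU : DifferentiableAt ℝ U t)
    (hPU : DifferentiableAt ℝ (fun s => P (U s)) t)
    (hDdiff : DifferentiableAt ℝ (fun s => ‖Q s - U s‖) t)
    (hnormal : ∀ s, P (U s) (Q s - U s) = Q s - U s)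
    (hsym : ∀ v w : E, (inner ℝ (P (U t) v) w : ℝ) = inner ℝ v (P (U t) w))
    (htang : P (U t) (deriv U t) = 0)
    (hDP : ‖deriv (fun s => P (U s)) t‖ ≤ (c/2) * ‖deriv U t‖) :
    ‖deriv Q t‖^2 ≥ (1 - c * ‖Q t - U t‖) * ‖deriv U t‖^2
      + (deriv (fun s => ‖Q s - U s‖) t)^2 :=
  stmt19_general Q U P c t hQ hU hPU hnormal hsym htang hDP
end
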